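/- arXiv:1903.04389 — 9 statements merged into one kernel-verified Lean document; each statement's English description precedes it below -/
import Mathlib

section
/- Let L, M be prefix-closed languages over A and K ⊆ L. If M is controllable with respect to L and A_u, then the supremal controllable sublanguage distributes over intersection with M: sup C(K ∩ M, L ∩ M) = sup C(K, L) ∩ M, where sup C(K, L) denotes the supremal sublanguage of K that is controllable with respect to L and A_u. -/
/-- Natural projection erasing events outside `B`. -/
noncomputable def proj {A : Type*} (B : Set A) (w : List A) : List A :=
  w.filter (fun a => @decide (a ∈ B) (Classical.propDecidable _))

/-- Concatenation of a language with a single event from `B`. -/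
def cat {A : Type*} (L : Set (List A)) (B : Set A) : Set (List A) :=
  {w | ∃ u ∈ L, ∃ a ∈ B, w = u ++ [a]}

/-- A language is prefix-closed. -/
def prefixClosed {A : Type*} (L : Set (List A)) : Prop :=
  ∀ w ∈ L, ∀ u : List A, u <+: w → u ∈ L

/-- `K` is controllable with respect to `L` and uncontrollable events `Au`. -/
def controllable {A : Type*} (K L : Set (List A)) (Au : Set A) : Prop :=
  cat K Au ∩ L ⊆ K

/-- `K` is normal with respect to `L` and observable events `Ao`. -/
def normalLang {A : Type*} (Ao : Set A) (K L : Set (List A)) : Prop :=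
  proj Ao ⁻¹' (proj Ao '' K) ∩ L ⊆ K

/-- Supremal controllable sublanguage of `K` w.r.t. `L` and `Au`. -/
def supC {A : Type*} (K L : Set (List A)) (Au : Set A) : Set (List A) :=
  ⋃₀ {K' | K' ⊆ K ∧ controllable K' L Au}

/-- Supremal normal sublanguage of `K` w.r.t. `L` and `Ao`. -/
def supN {A : Type*} (Ao : Set A) (K L : Set (List A)) : Set (List A) :=
  ⋃₀ {K' | K' ⊆ K ∧ normalLang Ao K' L}

lemma supC_subset {A : Type*} (K L : Set (List A)) (Au : Set A) :
    supC K L Au ⊆ K := by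
  rintro w ⟨K', ⟨hK', _⟩, hw⟩
  exact hK' hw

lemma supC_controllable {A : Type*} (K L : Set (List A)) (Au : Set A) :
    controllable (supC K L Au) L Au := by
  rintro w ⟨⟨u, ⟨K', ⟨hK'K, hK'c⟩, hu⟩, a, ha, rfl⟩, hwL⟩
  exact ⟨K', ⟨hK'K, hK'c⟩, hK'c ⟨⟨u, hu, a, ha, rfl⟩, hwL⟩⟩

/-- Distributivity of the supremal controllable sublanguage: if `M` is
controllable w.r.t. `L`, then `supC (K ∩ M) (L ∩ M) = supC K L ∩ M`. -/
theorem stmt2 {A : Type*} (Au : Set A) (K L M : Set (List A))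
    (hpcK : prefixClosed K) (hpcL : prefixClosed L) (hpcM : prefixClosed M)
    (hKL : K ⊆ L) (hM : controllable M L Au) :
    supC (K ∩ M) (L ∩ M) Au = supC K L Au ∩ M := by
  apply Set.Subset.antisymm
  · rintro w ⟨K', ⟨hK'K, hK'c⟩, hw⟩
    refine ⟨⟨K', ⟨fun x hx => (hK'K hx).1, ?_⟩, hw⟩, (hK'K hw).2⟩
    rintro v ⟨⟨u, hu, a, ha, rfl⟩, hvL⟩
    have hvM : u ++ [a] ∈ M := hM ⟨⟨u, (hK'K hu).2, a, ha, rfl⟩, hvL⟩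
    exact hK'c ⟨⟨u, hu, a, ha, rfl⟩, hvL, hvM⟩
  · rintro w ⟨hwS, hwM⟩
    refine ⟨supC K L Au ∩ M, ⟨fun x hx => ⟨supC_subset K L Au hx.1, hx.2⟩, ?_⟩, hwS, hwM⟩
    rintro v ⟨⟨u, ⟨hu1, hu2⟩, a, ha, rfl⟩, hvL, hvM⟩
    exact ⟨supC_controllable K L Au ⟨⟨u, hu1, a, ha, rfl⟩, hvL⟩, hvM⟩
end

section
/- Let L, M be languages over A and K ⊆ L. If M is normal with respect to L and A_o, then the supremal normal sublanguage distributes over intersection with M: sup N(K ∩ M, L ∩ M) = sup N(K, L) ∩ M, where sup N(K, L) is the union of all sublanguages of K that are normal with respect to L and A_o. -/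
/-- Distributivity of the supremal normal sublanguage: if `M` is normal
w.r.t. `L`, then `supN (K ∩ M) (L ∩ M) = supN K L ∩ M`. -/
theorem stmt7 {A : Type*} (Ao : Set A) (K L M : Set (List A))
    (hKL : K ⊆ L) (hM : normalLang Ao M L) :
    supN Ao (K ∩ M) (L ∩ M) = supN Ao K L ∩ M := by
  have supN_sub : supN Ao K L ⊆ K := by
    rintro x ⟨K', ⟨hK', _⟩, hx⟩; exact hK' hx
  have supN_normal : normalLang Ao (supN Ao K L) L := by
    rintro x ⟨⟨y, hy, hpy⟩, hxL⟩
    obtain ⟨K', ⟨hK'K, hK'n⟩, hyK'⟩ := hy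
    exact ⟨K', ⟨hK'K, hK'n⟩, hK'n ⟨⟨y, hyK', hpy⟩, hxL⟩⟩
  apply Set.Subset.antisymm
  · rintro x ⟨K', ⟨hK'KM, hK'n⟩, hxK'⟩
    have hK'M : K' ⊆ M := fun z hz => (hK'KM hz).2
    have hK'nL : normalLang Ao K' L := by
      rintro x ⟨⟨y, hy, hpy⟩, hxL⟩
      have hxM : x ∈ M := hM ⟨⟨y, hK'M hy, hpy⟩, hxL⟩
      exact hK'n ⟨⟨y, hy, hpy⟩, hxL, hxM⟩
    exact ⟨⟨K', ⟨fun z hz => (hK'KM hz).1, hK'nL⟩, hxK'⟩, hK'M hxK'⟩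
  · intro x hx
    refine ⟨supN Ao K L ∩ M, ⟨fun z hz => ⟨supN_sub hz.1, hz.2⟩, ?_⟩, hx⟩
    rintro y ⟨⟨z, hz, hpz⟩, hyL, hyM⟩
    exact ⟨supN_normal ⟨⟨z, hz.1, hpz⟩, hyL⟩, hyM⟩
end

section
/- For any operation (.)⇑ with (K, L)⇑ ⊆ K, given K_i ⊆ L_i ⊆ A_i* for i = 1, 2, K = K₁ ∥ K₂, and L = L₁ ∥ L₂ (synchronous products over A = A₁ ∪ A₂), assume: (1) (.)⇑ is monotonically increasing in its first argument; (2) (P_i⁻¹(K_i), P_i⁻¹(L_i))⇑ = P_i⁻¹((K_i, L_i)⇑) for i = 1, 2 (exchangeability); (3) (P₁⁻¹(K₁), P₁⁻¹(L₁))⇑ is distributable with respect to P₂⁻¹(L₂) and (P₂⁻¹(K₂), P₂⁻¹(L₂))⇑ is distributable with respect to P₁⁻¹(L₁). Then (K, L)⇑ ⊆ (K₁, L₁)⇑ ∥ (K₂, L₂)⇑. -/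
/-- Abstract comparison theorem: monotonicity, exchangeability, and
distributivity of the closed-loop operation `Up` imply that the global
closed-loop is contained in the synchronous product of local closed-loops. -/
theorem stmt8 {A : Type*} (A1 A2 : Set A)
    (Up : Set (List A) → Set (List A) → Set (List A))
    (K1 L1 K2 L2 : Set (List A))
    (hW1 : ∀ w ∈ L1, ∀ a ∈ w, a ∈ A1) (hW2 : ∀ w ∈ L2, ∀ a ∈ w, a ∈ A2)
    (hK1 : K1 ⊆ L1) (hK2 : K2 ⊆ L2)
    (hSub : ∀ K L : Set (List A), K ⊆ L → Up K L ⊆ K)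
    (hMono : ∀ K K' L : Set (List A), K ⊆ K' → K' ⊆ L → Up K L ⊆ Up K' L)
    (hExch1 : Up (proj A1 ⁻¹' K1) (proj A1 ⁻¹' L1) = proj A1 ⁻¹' (Up K1 L1))
    (hExch2 : Up (proj A2 ⁻¹' K2) (proj A2 ⁻¹' L2) = proj A2 ⁻¹' (Up K2 L2))
    (hDist1 : Up (proj A1 ⁻¹' K1 ∩ proj A2 ⁻¹' L2) (proj A1 ⁻¹' L1 ∩ proj A2 ⁻¹' L2)
        = Up (proj A1 ⁻¹' K1) (proj A1 ⁻¹' L1) ∩ proj A2 ⁻¹' L2)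
    (hDist2 : Up (proj A2 ⁻¹' K2 ∩ proj A1 ⁻¹' L1) (proj A2 ⁻¹' L2 ∩ proj A1 ⁻¹' L1)
        = Up (proj A2 ⁻¹' K2) (proj A2 ⁻¹' L2) ∩ proj A1 ⁻¹' L1) :
    Up (proj A1 ⁻¹' K1 ∩ proj A2 ⁻¹' K2) (proj A1 ⁻¹' L1 ∩ proj A2 ⁻¹' L2)
      ⊆ proj A1 ⁻¹' (Up K1 L1) ∩ proj A2 ⁻¹' (Up K2 L2) := by
  have hL : proj A1 ⁻¹' K1 ∩ proj A2 ⁻¹' L2 ⊆ proj A1 ⁻¹' L1 ∩ proj A2 ⁻¹' L2 :=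
    Set.inter_subset_inter_left _ (Set.preimage_mono hK1)
  have hL' : proj A2 ⁻¹' K2 ∩ proj A1 ⁻¹' L1 ⊆ proj A2 ⁻¹' L2 ∩ proj A1 ⁻¹' L1 :=
    Set.inter_subset_inter_left _ (Set.preimage_mono hK2)
  have h1 : Up (proj A1 ⁻¹' K1 ∩ proj A2 ⁻¹' K2) (proj A1 ⁻¹' L1 ∩ proj A2 ⁻¹' L2)
      ⊆ Up (proj A1 ⁻¹' K1 ∩ proj A2 ⁻¹' L2) (proj A1 ⁻¹' L1 ∩ proj A2 ⁻¹' L2) :=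
    hMono _ _ _ (Set.inter_subset_inter_right _ (Set.preimage_mono hK2)) hL
  have h2 : Up (proj A1 ⁻¹' K1 ∩ proj A2 ⁻¹' K2) (proj A1 ⁻¹' L1 ∩ proj A2 ⁻¹' L2)
      ⊆ Up (proj A2 ⁻¹' K2 ∩ proj A1 ⁻¹' L1) (proj A2 ⁻¹' L2 ∩ proj A1 ⁻¹' L1) := by
    rw [Set.inter_comm (proj A1 ⁻¹' L1)]
    exact hMono _ _ _ (by
      rw [Set.inter_comm]
      exact Set.inter_subset_inter_right _ (Set.preimage_mono hK1)) hL'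
  rw [hDist1, hExch1] at h1
  rw [hDist2, hExch2] at h2
  intro w hw
  exact ⟨(h1 hw).1, (h2 hw).1⟩
end

section
/- Given K_i ⊆ L_i ⊆ A_i* for i = 1, 2, prefix-closed, with K = K₁ ∥ K₂ and L = L₁ ∥ L₂: if L₁ and L₂ are globally mutually controllable, i.e., P_i⁻¹(L_i)·A_{i,u} ∩ P_j⁻¹(L_j) ⊆ P_i⁻¹(L_i) for i ≠ j, then the supremal controllable sublanguage satisfies sup C(K, L, A_u) ⊆ sup C(K₁, L₁, A_{1,u}) ∥ sup C(K₂, L₂, A_{2,u}). -/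
lemma proj_append {A : Type*} (B : Set A) (u v : List A) :
    proj B (u ++ v) = proj B u ++ proj B v := List.filter_append _ _

lemma proj_single_mem {A : Type*} {B : Set A} {a : A} (h : a ∈ B) :
    proj B [a] = [a] := by
  simp [proj, h]

lemma proj_single_not_mem {A : Type*} {B : Set A} {a : A} (h : a ∉ B) :
    proj B [a] = [] := by
  simp [proj, h]

lemma mem_supC {A : Type*} {K L K' : Set (List A)} {Au : Set A} {w : List A}
    (hsub : K' ⊆ K) (hctrl : controllable K' L Au) (hw : w ∈ K') :
    w ∈ supC K L Au := ⟨K', ⟨hsub, hctrl⟩, hw⟩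

/-- Comparison for the supremal controllable sublanguage: global mutual
controllability of `L₁`, `L₂` implies the global supremal controllable
sublanguage is contained in the synchronous product of the local ones. -/
theorem stmt9 {A : Type*} (A1 A2 Au : Set A)
    (K1 L1 K2 L2 : Set (List A))
    (hW1 : ∀ w ∈ L1, ∀ a ∈ w, a ∈ A1) (hW2 : ∀ w ∈ L2, ∀ a ∈ w, a ∈ A2)
    (hK1 : K1 ⊆ L1) (hK2 : K2 ⊆ L2)
    (hpcK1 : prefixClosed K1) (hpcK2 : prefixClosed K2)
    (hpcL1 : prefixClosed L1) (hpcL2 : prefixClosed L2)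
    (hGMC1 : cat (proj A1 ⁻¹' L1) (A1 ∩ Au) ∩ proj A2 ⁻¹' L2 ⊆ proj A1 ⁻¹' L1)
    (hGMC2 : cat (proj A2 ⁻¹' L2) (A2 ∩ Au) ∩ proj A1 ⁻¹' L1 ⊆ proj A2 ⁻¹' L2) :
    supC (proj A1 ⁻¹' K1 ∩ proj A2 ⁻¹' K2) (proj A1 ⁻¹' L1 ∩ proj A2 ⁻¹' L2) Au
      ⊆ proj A1 ⁻¹' (supC K1 L1 (A1 ∩ Au)) ∩ proj A2 ⁻¹' (supC K2 L2 (A2 ∩ Au)) := by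
  intro w hw
  have hSsub := supC_subset (proj A1 ⁻¹' K1 ∩ proj A2 ⁻¹' K2)
    (proj A1 ⁻¹' L1 ∩ proj A2 ⁻¹' L2) Au
  have hSctrl := supC_controllable (proj A1 ⁻¹' K1 ∩ proj A2 ⁻¹' K2)
    (proj A1 ⁻¹' L1 ∩ proj A2 ⁻¹' L2) Au
  set S := supC (proj A1 ⁻¹' K1 ∩ proj A2 ⁻¹' K2) (proj A1 ⁻¹' L1 ∩ proj A2 ⁻¹' L2) Au with hS
  have key : ∀ (v : List A) (a : A), v ∈ S → a ∈ A1 → a ∈ Au →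
      proj A1 v ++ [a] ∈ L1 → v ++ [a] ∈ S := by
    intro v a hvS haA1 haAu hL1
    have h1 : proj A1 (v ++ [a]) ∈ L1 := by
      rw [proj_append, proj_single_mem haA1]; exact hL1
    have h2 : proj A2 (v ++ [a]) ∈ L2 := by
      by_cases haA2 : a ∈ A2
      · exact hGMC2 ⟨⟨v, hK2 (hSsub hvS).2, a, ⟨haA2, haAu⟩, rfl⟩, h1⟩
      · rw [proj_append, proj_single_not_mem haA2, List.append_nil]
        exact hK2 (hSsub hvS).2
    exact hSctrl ⟨⟨v, hvS, a, haAu, rfl⟩, h1, h2⟩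
  have key2 : ∀ (v : List A) (a : A), v ∈ S → a ∈ A2 → a ∈ Au →
      proj A2 v ++ [a] ∈ L2 → v ++ [a] ∈ S := by
    intro v a hvS haA2 haAu hL2
    have h2 : proj A2 (v ++ [a]) ∈ L2 := by
      rw [proj_append, proj_single_mem haA2]; exact hL2
    have h1 : proj A1 (v ++ [a]) ∈ L1 := by
      by_cases haA1 : a ∈ A1
      · exact hGMC1 ⟨⟨v, hK1 (hSsub hvS).1, a, ⟨haA1, haAu⟩, rfl⟩, h2⟩
      · rw [proj_append, proj_single_not_mem haA1, List.append_nil]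
        exact hK1 (hSsub hvS).1
    exact hSctrl ⟨⟨v, hvS, a, haAu, rfl⟩, h1, h2⟩
  constructor
  · apply mem_supC (K' := proj A1 '' S)
    · rintro _ ⟨v, hv, rfl⟩; exact (hSsub hv).1
    · rintro x ⟨⟨u, ⟨v, hvS, rfl⟩, a, ⟨haA1, haAu⟩, rfl⟩, hL1⟩
      refine ⟨v ++ [a], key v a hvS haA1 haAu hL1, ?_⟩
      rw [proj_append, proj_single_mem haA1]
    · exact ⟨w, hw, rfl⟩
  · apply mem_supC (K' := proj A2 '' S)
    · rintro _ ⟨v, hv, rfl⟩; exact (hSsub hv).2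
    · rintro x ⟨⟨u, ⟨v, hvS, rfl⟩, a, ⟨haA2, haAu⟩, rfl⟩, hL2⟩
      refine ⟨v ++ [a], key2 v a hvS haA2 haAu hL2, ?_⟩
      rw [proj_append, proj_single_mem haA2]
    · exact ⟨w, hw, rfl⟩
end

section
/- Prefix-closed languages L₁ ⊆ A₁*, L₂ ⊆ A₂* are globally mutually controllable (P_i⁻¹(L_i)·A_{i,u} ∩ P_j⁻¹(L_j) ⊆ P_i⁻¹(L_i) for all i ≠ j) if and only if for each i ≠ j, P_i⁻¹(L_i) is controllable with respect to P_j⁻¹(L_j) and the global uncontrollable event set A_u, i.e., P_i⁻¹(L_i)·A_u ∩ P_j⁻¹(L_j) ⊆ P_i⁻¹(L_i). -/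
lemma proj_append_singleton {A : Type*} (B : Set A) (u : List A) (a : A) :
    proj B (u ++ [a]) = proj B u ++ proj B [a] := by
  simp [proj, List.filter_append]

lemma proj_not_mem {A : Type*} (B : Set A) (u : List A) (a : A) (ha : a ∉ B) :
    proj B (u ++ [a]) = proj B u := by
  rw [proj_append_singleton]
  simp [proj, ha]

lemma key {A : Type*} (B Au : Set A) (L M : Set (List A))
    (h : cat (proj B ⁻¹' L) (B ∩ Au) ∩ M ⊆ proj B ⁻¹' L) :
    cat (proj B ⁻¹' L) Au ∩ M ⊆ proj B ⁻¹' L := by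
  rintro w ⟨⟨u, hu, a, ha, rfl⟩, hM⟩
  by_cases hB : a ∈ B
  · exact h ⟨⟨u, hu, a, ⟨hB, ha⟩, rfl⟩, hM⟩
  · show proj B (u ++ [a]) ∈ L
    rw [proj_not_mem B u a hB]; exact hu

lemma key2 {A : Type*} (B Au : Set A) (L M : Set (List A))
    (h : cat (proj B ⁻¹' L) Au ∩ M ⊆ proj B ⁻¹' L) :
    cat (proj B ⁻¹' L) (B ∩ Au) ∩ M ⊆ proj B ⁻¹' L := by
  rintro w ⟨⟨u, hu, a, ha, rfl⟩, hM⟩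
  exact h ⟨⟨u, hu, a, ha.2, rfl⟩, hM⟩

/-- Global mutual controllability (with local uncontrollable events) is
equivalent to mutual controllability of the inverse projections with respect
to the global uncontrollable event set. -/
theorem stmt10 {A : Type*} (A1 A2 Au : Set A) (L1 L2 : Set (List A))
    (hW1 : ∀ w ∈ L1, ∀ a ∈ w, a ∈ A1) (hW2 : ∀ w ∈ L2, ∀ a ∈ w, a ∈ A2)
    (hpc1 : prefixClosed L1) (hpc2 : prefixClosed L2) :
    (cat (proj A1 ⁻¹' L1) (A1 ∩ Au) ∩ proj A2 ⁻¹' L2 ⊆ proj A1 ⁻¹' L1 ∧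
     cat (proj A2 ⁻¹' L2) (A2 ∩ Au) ∩ proj A1 ⁻¹' L1 ⊆ proj A2 ⁻¹' L2)
    ↔
    (cat (proj A1 ⁻¹' L1) Au ∩ proj A2 ⁻¹' L2 ⊆ proj A1 ⁻¹' L1 ∧
     cat (proj A2 ⁻¹' L2) Au ∩ proj A1 ⁻¹' L1 ⊆ proj A2 ⁻¹' L2) := by
  constructor
  · rintro ⟨h1, h2⟩
    exact ⟨key A1 Au L1 _ h1, key A2 Au L2 _ h2⟩
  · rintro ⟨h1, h2⟩
    exact ⟨key2 A1 Au L1 _ h1, key2 A2 Au L2 _ h2⟩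
end

section
/- For a language L_i ⊆ A_i* with A_i ⊆ A and consistent observability (A_o ∩ A_i = A_{i,o}), the inverse projection commutes with observation closure: O⁻¹(O(P_i⁻¹(L_i))) = P_i⁻¹(O_i⁻¹(O_i(L_i))), where O: A* → A_o*, O_i: A_i* → A_{i,o}*, and P_i: A* → A_i* are natural projections. -/
section Projection

variable {A : Type*} {B C : Set A}

theorem proj_cons_of_mem {a : A} (h : a ∈ B) (w : List A) : proj B (a :: w) = a :: proj B w := by
  simp [proj, h]

theorem proj_cons_of_notMem {a : A} (h : a ∉ B) (w : List A) : proj B (a :: w) = proj B w := by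
  simp [proj, h]

theorem mem_of_mem_proj {a : A} {w : List A} (h : a ∈ proj B w) : a ∈ B := by
  simpa [proj] using (List.mem_filter.mp h).2

theorem proj_eq_self {w : List A} (h : ∀ a ∈ w, a ∈ B) : proj B w = w :=
  List.filter_eq_self.mpr (by simpa using h)

theorem proj_proj (w : List A) : proj B (proj C w) = proj (B ∩ C) w := by
  simp only [proj, List.filter_filter]
  congr 1
  funext a
  rw [Bool.eq_iff_iff]
  simp

theorem proj_proj_of_subset (h : B ⊆ C) (w : List A) : proj B (proj C w) = proj B w := by
  rw [proj_proj, Set.inter_eq_left.mpr h]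

theorem exists_proj_eq_and_proj_eq :
    ∀ {u x : List A}, (∀ a ∈ u, a ∈ B) → (∀ a ∈ x, a ∈ C) → proj C u = proj B x →
      ∃ v, proj B v = u ∧ proj C v = x
  | [], x, _, hx, h => ⟨x, h.symm, proj_eq_self hx⟩
  | a :: u, [], hu, _, h => ⟨a :: u, proj_eq_self hu, h⟩
  | a :: u, b :: x, hu, hx, h => by
    have hu' : ∀ c ∈ u, c ∈ B := fun c hc => hu c (List.mem_cons_of_mem a hc)
    have hx' : ∀ c ∈ x, c ∈ C := fun c hc => hx c (List.mem_cons_of_mem b hc)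
    have haB := hu a List.mem_cons_self
    have hbC := hx b List.mem_cons_self
    by_cases haC : a ∈ C
    · by_cases hbB : b ∈ B
      · rw [proj_cons_of_mem haC, proj_cons_of_mem hbB, List.cons.injEq] at h
        obtain ⟨rfl, h⟩ := h
        obtain ⟨v, hvu, hvx⟩ := exists_proj_eq_and_proj_eq hu' hx' h
        exact ⟨a :: v, by rw [proj_cons_of_mem haB, hvu], by rw [proj_cons_of_mem haC, hvx]⟩
      · rw [proj_cons_of_notMem hbB] at h
        obtain ⟨v, hvu, hvx⟩ := exists_proj_eq_and_proj_eq hu hx' h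
        exact ⟨b :: v, by rw [proj_cons_of_notMem hbB, hvu], by rw [proj_cons_of_mem hbC, hvx]⟩
    · rw [proj_cons_of_notMem haC] at h
      obtain ⟨v, hvu, hvx⟩ := exists_proj_eq_and_proj_eq hu' hx h
      exact ⟨a :: v, by rw [proj_cons_of_mem haB, hvu], by rw [proj_cons_of_notMem haC, hvx]⟩

end Projection

/-- The inverse projection commutes with observation closure:
`O⁻¹ O (P_i⁻¹ L_i) = P_i⁻¹ (O_i⁻¹ O_i L_i)` with `A_{i,o} = A_i ∩ A_o`. -/
theorem stmt13 {A : Type*} (Ai Ao : Set A) (Li : Set (List A))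
    (hW : ∀ w ∈ Li, ∀ a ∈ w, a ∈ Ai) :
    proj Ao ⁻¹' (proj Ao '' (proj Ai ⁻¹' Li))
      = proj Ai ⁻¹' (proj (Ai ∩ Ao) ⁻¹' (proj (Ai ∩ Ao) '' Li)) := by
  ext w
  constructor
  · rintro ⟨v, hv, hvw⟩
    refine ⟨proj Ai v, hv, ?_⟩
    calc proj (Ai ∩ Ao) (proj Ai v)
        = proj (Ai ∩ Ao) (proj Ao v) := by
          rw [proj_proj_of_subset Set.inter_subset_left,
            proj_proj_of_subset Set.inter_subset_right]
      _ = proj (Ai ∩ Ao) (proj Ai w) := by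
          rw [hvw, proj_proj_of_subset Set.inter_subset_left,
            proj_proj_of_subset Set.inter_subset_right]
  · rintro ⟨u, hu, huw⟩
    have huAi := hW u hu
    have hobs : proj Ao u = proj Ai (proj Ao w) := by
      calc proj Ao u = proj Ao (proj Ai u) := by rw [proj_eq_self huAi]
        _ = proj (Ai ∩ Ao) u := by rw [proj_proj, Set.inter_comm]
        _ = proj (Ai ∩ Ao) (proj Ai w) := huw
        _ = proj Ai (proj Ao w) := by rw [proj_proj_of_subset Set.inter_subset_left, proj_proj]
    obtain ⟨v, hvu, hvw⟩ :=
      exists_proj_eq_and_proj_eq huAi (fun _ => mem_of_mem_proj) hobs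
    exact ⟨v, by rwa [Set.mem_preimage, hvu], hvw⟩
end

section
/- Relative observability is preserved under unions: if K₁ ⊆ C and K₂ ⊆ C are both C-observable with respect to L and A_o, then K₁ ∪ K₂ is C-observable with respect to L and A_o. -/
/-- `K` is `C`-observable with respect to `L` and observable events `Ao`. -/
def relObs {A : Type*} (Ao : Set A) (K C L : Set (List A)) : Prop :=
  ∀ w ∈ K, ∀ w' ∈ C, proj Ao w = proj Ao w' →
    ∀ a : A, w ++ [a] ∈ K → w' ++ [a] ∈ L → w' ++ [a] ∈ K

/-- Relative observability is preserved under unions. -/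
theorem stmt16 {A : Type*} (Ao : Set A) (K1 K2 C L : Set (List A))
    (hpc1 : prefixClosed K1) (hpc2 : prefixClosed K2)
    (hpcC : prefixClosed C) (hpcL : prefixClosed L)
    (hK1 : K1 ⊆ C) (hK2 : K2 ⊆ C) (hCL : C ⊆ L)
    (h1 : relObs Ao K1 C L) (h2 : relObs Ao K2 C L) :
    relObs Ao (K1 ∪ K2) C L := by
  rintro w _ w' hw' hproj a (ha | ha) hL
  · exact Or.inl (h1 w (hpc1 _ ha w (List.prefix_append w [a])) w' hw' hproj a ha hL)
  · exact Or.inr (h2 w (hpc2 _ ha w (List.prefix_append w [a])) w' hw' hproj a ha hL)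
end

section
/- Let L, M, K be prefix-closed languages with K ⊆ L. If M is K-observable with respect to L (in the relaxed sense not requiring M ⊆ K), then sup R(K ∩ M, L ∩ M) = sup R(K, L) ∩ M, where sup R(K, L) denotes the supremal K-observable sublanguage of K with respect to L, and sup R(K ∩ M, L ∩ M) denotes the supremal (K ∩ M)-observable sublanguage of K ∩ M with respect to L ∩ M. -/
/-- `M` is `C`-observable with respect to `L` and `Ao` (relaxed form, not
requiring `M ⊆ C ⊆ L`). -/
def cObs {A : Type*} (Ao : Set A) (M C L : Set (List A)) : Prop :=
  ∀ w w' : List A, proj Ao w = proj Ao w' →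
    ∀ a : A, w ++ [a] ∈ M → w' ∈ C → w' ++ [a] ∈ L → w' ++ [a] ∈ M

/-- Supremal `C`-observable sublanguage of `K` w.r.t. `L`. -/
def supR {A : Type*} (Ao : Set A) (K C L : Set (List A)) : Set (List A) :=
  ⋃₀ {K' | K' ⊆ K ∧ cObs Ao K' C L}

/-- Distributivity of the supremal relatively observable sublanguage: if `M`
is `K`-observable w.r.t. `L`, then
`sup R(K ∩ M, L ∩ M) = sup R(K, L) ∩ M`. -/
theorem stmt17 {A : Type*} (Ao : Set A) (K L M : Set (List A))
    (hKL : K ⊆ L)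
    (hpcK : prefixClosed K) (hpcL : prefixClosed L) (hpcM : prefixClosed M)
    (hM : cObs Ao M K L) :
    supR Ao (K ∩ M) (K ∩ M) (L ∩ M) = supR Ao K K L ∩ M := by
  apply Set.Subset.antisymm
  · rintro w ⟨K', ⟨hsub, hobs⟩, hw⟩
    refine ⟨⟨K', ⟨fun x hx => (hsub hx).1, ?_⟩, hw⟩, (hsub hw).2⟩
    intro u u' hp a hua hu' hu'a
    have huaM : u ++ [a] ∈ M := (hsub hua).2
    have hu'aM : u' ++ [a] ∈ M := hM u u' hp a huaM hu' hu'a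
    have hu'M : u' ∈ M := hpcM _ hu'aM u' (List.prefix_append _ _)
    exact hobs u u' hp a hua ⟨hu', hu'M⟩ ⟨hu'a, hu'aM⟩
  · rintro w ⟨⟨K', ⟨hsub, hobs⟩, hw⟩, hwM⟩
    refine ⟨K' ∩ M, ⟨fun x hx => ⟨hsub hx.1, hx.2⟩, ?_⟩, hw, hwM⟩
    intro u u' hp a hua hu' hu'a
    exact ⟨hobs u u' hp a hua.1 hu'.1 hu'a.1, hu'a.2⟩
end

section
/- Let L, M, K be prefix-closed languages over A with K ⊆ L. If M is L-observable with respect to L, then sup R_L(K ∩ M, L ∩ M) = sup R_L(K, L) ∩ M, where sup R_L(K, L) is the supremal sublanguage of K that is L-observable with respect to L, and sup R_L(K ∩ M, L ∩ M) is the supremal sublanguage of K ∩ M that is (L ∩ M)-observable with respect to L ∩ M. -/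
/-- Distributivity of the supremal `L`-observable sublanguage: if `M` is
`L`-observable w.r.t. `L`, then
`sup R_L(K ∩ M, L ∩ M) = sup R_L(K, L) ∩ M`. -/
theorem stmt18 {A : Type*} (Ao : Set A) (K L M : Set (List A))
    (hKL : K ⊆ L)
    (hpcK : prefixClosed K) (hpcL : prefixClosed L) (hpcM : prefixClosed M)
    (hM : cObs Ao M L L) :
    supR Ao (K ∩ M) (L ∩ M) (L ∩ M) = supR Ao K L L ∩ M := by
  apply Set.Subset.antisymm
  · intro x hx
    obtain ⟨K', ⟨hK'sub, hK'obs⟩, hxK'⟩ := hx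
    have hK'M : K' ⊆ M := fun y hy => (hK'sub hy).2
    have hK'obsL : cObs Ao K' L L := by
      intro w w' hproj a hwa hw'L hw'aL
      have hw'aM : w' ++ [a] ∈ M := hM w w' hproj a (hK'M hwa) hw'L hw'aL
      have hw'M : w' ∈ M := hpcM _ hw'aM w' (by simp)
      exact hK'obs w w' hproj a hwa ⟨hw'L, hw'M⟩ ⟨hw'aL, hw'aM⟩
    exact ⟨⟨K', ⟨fun y hy => (hK'sub hy).1, hK'obsL⟩, hxK'⟩, hK'M hxK'⟩
  · rintro x ⟨hxS, hxM⟩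
    refine ⟨supR Ao K L L ∩ M, ⟨?_, ?_⟩, ⟨hxS, hxM⟩⟩
    · rintro y ⟨hyS, hyM⟩
      obtain ⟨K', ⟨hsub, _⟩, hy⟩ := hyS
      exact ⟨hsub hy, hyM⟩
    · rintro w w' hproj a ⟨hwaS, hwaM⟩ hw' hw'a
      have hw'aM : w' ++ [a] ∈ M := hM w w' hproj a hwaM hw'.1 hw'a.1
      obtain ⟨K', ⟨hsub, hobs⟩, hwaK'⟩ := hwaS
      exact ⟨⟨K', ⟨hsub, hobs⟩, hobs w w' hproj a hwaK' hw'.1 hw'a.1⟩, hw'aM⟩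
end
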